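/- arXiv:1211.2356 — 6 statements merged into one kernel-verified Lean document; each statement's English description precedes it below -/
import Mathlib

section
/- Let v_1 be the sequence (1,0,0,...) and define v_{n+1,m} = ∑_{k=⌊(m+1)/2⌋}^{m−1} v_{n,k}. Then ∑_m v_{n,m} counts the reduced BFB sequences of length n, i.e., the sequences of strictly positive integers r_1,...,r_n with r_1 = 1 and r_{k+1} ≤ s_k for all k, where s_k is the k-th partial sum. In particular, v_{n,m} equals the number of such sequences with s_n = m. -/
section BFBaux

/-- The set of reduced BFB sequences of length `n` with total `m`. -/
def bfbSet (n m : ℕ) : Set (ℕ → ℤ) :=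
  {r : ℕ → ℤ |
    r 1 = 1 ∧ (∀ i, (i = 0 ∨ n < i) → r i = 0) ∧
    (∀ k, 1 ≤ k → k < n →
      1 ≤ r (k + 1) ∧ r (k + 1) ≤ ∑ i ∈ Finset.Icc 1 k, r i) ∧
    (∑ i ∈ Finset.Icc 1 n, r i) = (m : ℤ)}

lemma bfb_base (m : ℕ) :
    bfbSet 1 m = if m = 1 then {(fun i => if i = 1 then (1:ℤ) else 0)} else ∅ := by
  ext r
  simp only [bfbSet, Set.mem_setOf_eq]
  constructor
  · rintro ⟨h1, h0, -, hs⟩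
    have : (∑ i ∈ Finset.Icc 1 1, r i) = r 1 := by simp
    rw [this, h1] at hs
    have hm : m = 1 := by exact_mod_cast hs.symm
    simp only [hm, if_pos rfl, Set.mem_singleton_iff]
    funext i
    rcases Nat.lt_or_ge i 1 with hi | hi
    · interval_cases i
      simp [h0 0 (Or.inl rfl)]
    · rcases Nat.eq_or_lt_of_le hi with hi1 | hi1
      · simp [← hi1, h1]
      · simp [Nat.ne_of_gt hi1, h0 i (Or.inr hi1)]
  · intro hr
    by_cases hm : m = 1
    · simp only [hm, if_pos rfl, Set.mem_singleton_iff] at hr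
      subst hr
      refine ⟨by norm_num, ?_, by omega, by simp [hm]⟩
      intro i hi
      have : i ≠ 1 := by omega
      simp [this]
    · simp [hm] at hr

lemma bfb_step (n m : ℕ) (hn : 1 ≤ n) :
    bfbSet (n + 1) m =
      ⋃ k ∈ Finset.Ico ((m + 1) / 2) m,
        (fun r : ℕ → ℤ => Function.update r (n + 1) ((m : ℤ) - (k : ℤ))) '' bfbSet n k := by
  ext r
  simp only [Set.mem_iUnion, Set.mem_image, Finset.mem_Ico]
  constructor
  · rintro ⟨h1, h0, hc, hs⟩
    -- the partial sum up to n
    have hsplit : (∑ i ∈ Finset.Icc 1 (n + 1), r i)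
        = (∑ i ∈ Finset.Icc 1 n, r i) + r (n + 1) := by
      rw [← Finset.sum_Icc_succ_top (by omega : 1 ≤ n + 1)]
    have hlast := hc n (by omega) (by omega)
    set S : ℤ := ∑ i ∈ Finset.Icc 1 n, r i with hS
    have hS1 : 1 ≤ S := le_trans hlast.1 hlast.2
    refine ⟨S.toNat, ?_, ?_⟩
    · have hto : (S.toNat : ℤ) = S := Int.toNat_of_nonneg (by omega)
      have hsum : S + r (n+1) = (m:ℤ) := by rw [← hsplit]; exact hs
      constructor
      · -- (m+1)/2 ≤ S.toNat, i.e. m ≤ 2 * S.toNat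
        have h2 : (m : ℤ) ≤ 2 * S := by
          have := hlast.2
          omega
        have : m ≤ 2 * S.toNat := by omega
        omega
      · have : (S.toNat : ℤ) < m := by
          have := hlast.1
          omega
        exact_mod_cast this
    · refine ⟨Function.update r (n + 1) 0, ⟨?_, ?_, ?_, ?_⟩, ?_⟩
      · rw [Function.update_of_ne (by omega)]; exact h1
      · intro i hi
        rcases eq_or_ne i (n+1) with h | h
        · rw [h, Function.update_self]
        · rw [Function.update_of_ne h]; exact h0 i (by omega)
      · intro k hk hkn
        have hne : k + 1 ≠ n + 1 := by omega
        rw [Function.update_of_ne hne]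
        have heq : (∑ i ∈ Finset.Icc 1 k, Function.update r (n+1) (0:ℤ) i)
            = ∑ i ∈ Finset.Icc 1 k, r i := by
          apply Finset.sum_congr rfl
          intro i hi
          rw [Finset.mem_Icc] at hi
          exact Function.update_of_ne (by omega) _ _
        rw [heq]
        exact hc k hk (by omega)
      · have heq : (∑ i ∈ Finset.Icc 1 n, Function.update r (n+1) (0:ℤ) i)
            = ∑ i ∈ Finset.Icc 1 n, r i := by
          apply Finset.sum_congr rfl
          intro i hi
          rw [Finset.mem_Icc] at hi
          exact Function.update_of_ne (by omega) _ _
        rw [heq, ← hS, Int.toNat_of_nonneg (by omega)]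
      · funext i
        rcases eq_or_ne i (n+1) with h | h
        · subst h
          rw [Function.update_self]
          have hto : (S.toNat : ℤ) = S := Int.toNat_of_nonneg (by omega)
          have hsum : S + r (n+1) = (m:ℤ) := by rw [← hsplit]; exact hs
          omega
        · rw [Function.update_of_ne h, Function.update_of_ne h]
  · rintro ⟨k, ⟨hk1, hk2⟩, r', ⟨h1, h0, hc, hs⟩, rfl⟩
    have hm2k : m ≤ 2 * k := by omega
    have hupd : ∀ i, i ≠ n + 1 → Function.update r' (n+1) ((m:ℤ) - k) i = r' i :=
      fun i h => Function.update_of_ne h _ _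
    have hsumn : (∑ i ∈ Finset.Icc 1 n, Function.update r' (n+1) ((m:ℤ)-k) i)
        = ∑ i ∈ Finset.Icc 1 n, r' i := by
      apply Finset.sum_congr rfl
      intro i hi
      rw [Finset.mem_Icc] at hi
      exact hupd i (by omega)
    refine ⟨?_, ?_, ?_, ?_⟩
    · rw [hupd 1 (by omega)]; exact h1
    · intro i hi
      rw [hupd i (by omega)]
      exact h0 i (by omega)
    · intro j hj hjn
      rcases Nat.lt_or_ge j n with hjlt | hjge
      · rw [hupd (j+1) (by omega)]
        have heq : (∑ i ∈ Finset.Icc 1 j, Function.update r' (n+1) ((m:ℤ)-k) i)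
            = ∑ i ∈ Finset.Icc 1 j, r' i := by
          apply Finset.sum_congr rfl
          intro i hi
          rw [Finset.mem_Icc] at hi
          exact hupd i (by omega)
        rw [heq]
        exact hc j hj hjlt
      · have hjn' : j = n := by omega
        have heq : (∑ i ∈ Finset.Icc 1 n, Function.update r' (n+1) ((m:ℤ)-(k:ℤ)) i)
            = (k:ℤ) := by rw [hsumn, hs]
        rw [hjn', Function.update_self, heq]
        exact ⟨by omega, by omega⟩
    · rw [Finset.sum_Icc_succ_top (by omega : 1 ≤ n + 1), hsumn, hs,
        Function.update_self]
      ring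

lemma ncard_biUnion {α β : Type*} (s : Finset β) (f : β → Set α)
    (hfin : ∀ b ∈ s, (f b).Finite)
    (hdisj : ∀ b₁ ∈ s, ∀ b₂ ∈ s, b₁ ≠ b₂ → Disjoint (f b₁) (f b₂)) :
    (⋃ b ∈ s, f b).ncard = ∑ b ∈ s, (f b).ncard := by
  classical
  induction s using Finset.induction_on with
  | empty => simp
  | @insert a s ha ih =>
    rw [Finset.sum_insert ha]
    have hU : (⋃ b ∈ insert a s, f b) = f a ∪ ⋃ b ∈ s, f b := by
      simp [Set.biUnion_insert]
    have hdis : Disjoint (f a) (⋃ b ∈ s, f b) := by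
      apply Set.disjoint_iUnion₂_right.mpr
      intro b hb
      exact hdisj a (Finset.mem_insert_self a s) b (Finset.mem_insert_of_mem hb)
        (fun h => ha (h ▸ hb))
    rw [hU, Set.ncard_union_eq hdis (hfin a (Finset.mem_insert_self a s))
        (Set.Finite.biUnion s.finite_toSet
          (fun b hb => hfin b (Finset.mem_insert_of_mem hb))),
      ih (fun b hb => hfin b (Finset.mem_insert_of_mem hb))
      (fun b₁ h₁ b₂ h₂ h => hdisj b₁ (Finset.mem_insert_of_mem h₁) b₂
        (Finset.mem_insert_of_mem h₂) h)]

lemma bfb_main (v : ℕ → ℕ → ℕ)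
    (h1 : ∀ m, v 1 m = if m = 1 then 1 else 0)
    (hrec : ∀ n m, 1 ≤ n → v (n + 1) m = ∑ k ∈ Finset.Ico ((m + 1) / 2) m, v n k) :
    ∀ n, 1 ≤ n → ∀ m, (bfbSet n m).Finite ∧ (bfbSet n m).ncard = v n m := by
  intro n
  induction n with
  | zero => omega
  | succ n ih =>
    intro _ m
    rcases Nat.eq_zero_or_pos n with hn | hn
    · subst hn
      rw [bfb_base m, h1]
      by_cases hm : m = 1 <;> simp [hm]
    · have ih' := ih hn
      rw [bfb_step n m hn, hrec n m hn]
      have hinj : ∀ k : ℕ, Set.InjOn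
          (fun r : ℕ → ℤ => Function.update r (n + 1) ((m : ℤ) - (k : ℤ)))
          (bfbSet n k) := by
        intro k r1 hr1 r2 hr2 h
        funext i
        rcases eq_or_ne i (n+1) with hi | hi
        · subst hi
          rw [hr1.2.1 (n+1) (Or.inr (by omega)), hr2.2.1 (n+1) (Or.inr (by omega))]
        · have := congrFun h i
          simp only [Function.update_of_ne hi] at this
          exact this
      have hfin : ∀ k ∈ Finset.Ico ((m + 1) / 2) m,
          ((fun r : ℕ → ℤ => Function.update r (n + 1) ((m : ℤ) - (k : ℤ))) ''
            bfbSet n k).Finite :=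
        fun k _ => ((ih' k).1).image _
      refine ⟨Set.Finite.biUnion (Finset.Ico ((m+1)/2) m).finite_toSet hfin, ?_⟩
      rw [ncard_biUnion _ _ hfin ?_]
      · apply Finset.sum_congr rfl
        intro k _
        rw [Set.ncard_image_of_injOn (hinj k), (ih' k).2]
      · -- disjointness
        intro k1 _ k2 _ hne
        rw [Set.disjoint_left]
        rintro r ⟨r1, hr1, rfl⟩ ⟨r2, hr2, heq⟩
        -- sum over Icc 1 n of the image equals k1 and k2
        have hsum : ∀ (k : ℕ) (r' : ℕ → ℤ), r' ∈ bfbSet n k →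
            (∑ i ∈ Finset.Icc 1 n, Function.update r' (n+1) ((m:ℤ)-(k:ℤ)) i) = (k:ℤ) := by
          intro k r' hr'
          have : (∑ i ∈ Finset.Icc 1 n, Function.update r' (n+1) ((m:ℤ)-(k:ℤ)) i)
              = ∑ i ∈ Finset.Icc 1 n, r' i := by
            apply Finset.sum_congr rfl
            intro i hi
            rw [Finset.mem_Icc] at hi
            exact Function.update_of_ne (by omega) _ _
          rw [this, hr'.2.2.2]
        have h1' := hsum k1 r1 hr1
        have h2' := hsum k2 r2 hr2
        have hfun : Function.update r1 (n+1) ((m:ℤ)-(k1:ℤ))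
            = Function.update r2 (n+1) ((m:ℤ)-(k2:ℤ)) := heq.symm
        have hk : (k1:ℤ) = (k2:ℤ) := by rw [← h1', ← h2', hfun]
        exact hne (by exact_mod_cast hk)

end BFBaux

/-- With `v 1 = (1,0,0,…)` and `v (n+1) m = ∑_{k=⌊(m+1)/2⌋}^{m-1} v n k`,
the value `v n m` counts the reduced BFB sequences of length `n` with total `m`:
sequences of strictly positive integers `r 1, …, r n` with `r 1 = 1` and
`r (k+1) ≤ s k` for all `k < n`, where `s k` is the `k`-th partial sum. -/
theorem reduced_bfb_sequence_count (v : ℕ → ℕ → ℕ)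
    (h1 : ∀ m, v 1 m = if m = 1 then 1 else 0)
    (hrec : ∀ n m, 1 ≤ n → v (n + 1) m = ∑ k ∈ Finset.Ico ((m + 1) / 2) m, v n k) :
    ∀ n m, 1 ≤ n →
      v n m = Set.ncard {r : ℕ → ℤ |
        r 1 = 1 ∧ (∀ i, (i = 0 ∨ n < i) → r i = 0) ∧
        (∀ k, 1 ≤ k → k < n →
          1 ≤ r (k + 1) ∧ r (k + 1) ≤ ∑ i ∈ Finset.Icc 1 k, r i) ∧
        (∑ i ∈ Finset.Icc 1 n, r i) = (m : ℤ)} := by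
  intro n m hn
  exact ((bfb_main v h1 hrec n hn m).2).symm
end

section
/- The number of reduced BFB sequences of length n, for n = 1,...,6, is 1, 1, 2, 7, 41, 397 respectively. -/
/-!
Extending a reduced BFB sequence of length `n ≥ 1` by one more term `x` gives a reduced BFB
sequence exactly when `1 ≤ x ≤ s_n`, and dropping the last term inverts this. Hence the
sequences of length `n + 1` are listed without repetition by appending each admissible last
term to each sequence of length `n`, and the six counts are the lengths of these lists.
-/

/-- The reduced BFB sequences of length `n`: strictly positive integer sequences
`r 1, …, r n` with `r 1 = 1` and `r (k+1) ≤ s k` for `k < n`, encoded as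
functions `ℕ → ℤ` vanishing outside `{1, …, n}`. -/
def ReducedBFBSeq (n : ℕ) : Set (ℕ → ℤ) :=
  {r | r 1 = 1 ∧ (∀ i, (i = 0 ∨ n < i) → r i = 0) ∧
    ∀ k, 1 ≤ k → k < n →
      1 ≤ r (k + 1) ∧ r (k + 1) ≤ ∑ i ∈ Finset.Icc 1 k, r i}

open Finset Function

/-- The list `[r 1, …, r n]` read as the function `r`. -/
def seqOfList (l : List ℤ) (i : ℕ) : ℤ := (0 :: l).getD i 0

lemma seqOfList_eq_zero_of_length_lt {l : List ℤ} {i : ℕ} (hi : l.length < i) :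
    seqOfList l i = 0 :=
  List.getD_eq_default _ _ (by simpa using hi)

lemma seqOfList_append_singleton (l : List ℤ) (x : ℤ) :
    seqOfList (l ++ [x]) = update (seqOfList l) (l.length + 1) x := by
  funext i
  rcases lt_trichotomy i (l.length + 1) with hi | rfl | hi
  · rw [update_of_ne hi.ne, seqOfList, seqOfList, ← List.cons_append,
      List.getD_append _ _ _ _ (by simpa using hi)]
  · rw [update_self, seqOfList, ← List.cons_append,
      List.getD_append_right _ _ _ _ (by simp)]
    simp
  · rw [update_of_ne hi.ne', seqOfList_eq_zero_of_length_lt (by simpa using hi),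
      seqOfList_eq_zero_of_length_lt (by omega)]

lemma seqOfList_ofFn {n : ℕ} {r : ℕ → ℤ} (hr : ∀ i, (i = 0 ∨ n < i) → r i = 0) :
    seqOfList (List.ofFn fun i : Fin n => r (i + 1)) = r := by
  funext i
  rcases Nat.lt_or_ge n i with hi | hi
  · rw [seqOfList_eq_zero_of_length_lt (by simpa using hi), hr i (.inr hi)]
  · cases i with
    | zero => exact (hr 0 (.inl rfl)).symm
    | succ i =>
      rw [seqOfList, List.getD_cons_succ, List.getD_eq_getElem _ _ (by simpa using hi),
        List.getElem_ofFn]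

lemma sum_Icc_seqOfList (l : List ℤ) : ∑ i ∈ Icc 1 l.length, seqOfList l i = l.sum := by
  induction l using List.reverseRecOn with
  | nil => simp
  | append_singleton l x ih =>
    rw [List.length_append, List.length_singleton, sum_Icc_succ_top (by omega),
      seqOfList_append_singleton, update_self, List.sum_append, List.sum_singleton, ← ih]
    congr 1
    exact sum_congr rfl fun i hi => update_of_ne (by rw [mem_Icc] at hi; omega) _ _

lemma eq_of_seqOfList_eq_of_length_eq {l₁ l₂ : List ℤ} (hlen : l₁.length = l₂.length)
    (h : seqOfList l₁ = seqOfList l₂) : l₁ = l₂ :=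
  List.ext_getElem hlen fun i h₁ h₂ => by
    simpa [seqOfList, List.getElem?_eq_getElem h₁, List.getElem?_eq_getElem h₂]
      using congrFun h (i + 1)

lemma update_mem_reducedBFBSeq_succ_iff {n : ℕ} (hn : 1 ≤ n) {r : ℕ → ℤ} (hr : r (n + 1) = 0)
    (x : ℤ) :
    update r (n + 1) x ∈ ReducedBFBSeq (n + 1) ↔
      r ∈ ReducedBFBSeq n ∧ 1 ≤ x ∧ x ≤ ∑ i ∈ Icc 1 n, r i := by
  have sum_update {k : ℕ} (hk : k ≤ n) :
      ∑ i ∈ Icc 1 k, update r (n + 1) x i = ∑ i ∈ Icc 1 k, r i :=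
    sum_congr rfl fun i hi => update_of_ne (by rw [mem_Icc] at hi; omega) _ _
  simp only [ReducedBFBSeq, Set.mem_ofPred_eq, update_of_ne (show 1 ≠ n + 1 by omega)]
  constructor
  · rintro ⟨h₁, hzero, hstep⟩
    refine ⟨⟨h₁, fun i hi => ?_, fun k hk hkn => ?_⟩, ?_⟩
    · rcases eq_or_ne i (n + 1) with rfl | hne
      · exact hr
      · simpa [update_of_ne hne] using hzero i (by omega)
    · simpa [update_of_ne (show k + 1 ≠ n + 1 by omega), sum_update hkn.le]
        using hstep k hk (by omega)
    · simpa [sum_update le_rfl] using hstep n hn (by omega)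
  · rintro ⟨⟨h₁, hzero, hstep⟩, hx₁, hx₂⟩
    refine ⟨h₁, fun i hi => ?_, fun k hk hkn => ?_⟩
    · rw [update_of_ne (by omega)]
      exact hzero i (by omega)
    · rw [sum_update (by omega)]
      rcases (Nat.lt_succ_iff_lt_or_eq.mp hkn) with hlt | rfl
      · rw [update_of_ne (by omega)]
        exact hstep k hk hlt
      · simpa using ⟨hx₁, hx₂⟩

/-- The reduced BFB sequences of length `n + 1`, as lists. -/
def bfbLists : ℕ → List (List ℤ)
  | 0 => [[1]]
  | n + 1 => (bfbLists n).flatMap fun l =>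
      (List.range l.sum.toNat).map fun j : ℕ => l ++ [(j : ℤ) + 1]

lemma length_of_mem_bfbLists {n : ℕ} {l : List ℤ} (hl : l ∈ bfbLists n) : l.length = n + 1 := by
  induction n generalizing l with
  | zero => rw [List.mem_singleton.mp hl]; rfl
  | succ n ih =>
    simp only [bfbLists, List.mem_flatMap, List.mem_map] at hl
    obtain ⟨a, ha, j, -, rfl⟩ := hl
    simp [ih ha]

lemma append_singleton_mem_bfbLists_succ_iff {n : ℕ} {a : List ℤ} {x : ℤ} :
    a ++ [x] ∈ bfbLists (n + 1) ↔ a ∈ bfbLists n ∧ 1 ≤ x ∧ x ≤ a.sum := by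
  simp only [bfbLists, List.mem_flatMap, List.mem_map, List.mem_range]
  constructor
  · rintro ⟨b, hb, j, hj, heq⟩
    obtain ⟨rfl, hx⟩ := List.append_inj' heq rfl
    simp only [List.cons.injEq, and_true] at hx
    exact ⟨hb, by omega, by omega⟩
  · rintro ⟨ha, hx₁, hx₂⟩
    exact ⟨a, ha, (x - 1).toNat, by omega, by rw [Int.toNat_of_nonneg (by omega), sub_add_cancel]⟩

lemma nodup_bfbLists (n : ℕ) : (bfbLists n).Nodup := by
  induction n with
  | zero => simp [bfbLists]
  | succ n ih =>
    refine List.nodup_flatMap.mpr ⟨fun a _ => (List.nodup_range).map fun i j h => ?_, ?_⟩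
    · simpa using h
    · refine ih.imp fun hab l hl hl' => hab ?_
      simp only [List.mem_map] at hl hl'
      obtain ⟨i, -, rfl⟩ := hl
      obtain ⟨j, -, h⟩ := hl'
      exact (List.append_inj' h rfl).1.symm

lemma seqOfList_mem_reducedBFBSeq_iff {n : ℕ} {l : List ℤ} (hl : l.length = n + 1) :
    seqOfList l ∈ ReducedBFBSeq (n + 1) ↔ l ∈ bfbLists n := by
  induction n generalizing l with
  | zero =>
    obtain ⟨x, rfl⟩ := List.length_eq_one_iff.mp hl
    simp only [ReducedBFBSeq, Set.mem_ofPred_eq, bfbLists, List.mem_singleton, List.cons.injEq,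
      and_true]
    constructor
    · exact fun h => h.1
    · rintro rfl
      refine ⟨rfl, fun i hi => ?_, fun k hk hk' => by omega⟩
      rcases hi with rfl | hi
      · rfl
      · exact seqOfList_eq_zero_of_length_lt hi
  | succ n ih =>
    obtain ⟨a, x, rfl⟩ : ∃ a x, l = a ++ [x] := by
      rcases List.eq_nil_or_concat l with rfl | h
      · simp at hl
      · simpa using h
    have ha : a.length = n + 1 := by simpa using hl
    rw [seqOfList_append_singleton, ha,
      update_mem_reducedBFBSeq_succ_iff (by omega) (seqOfList_eq_zero_of_length_lt (by omega)),
      ← ha, sum_Icc_seqOfList, ha, ih ha, append_singleton_mem_bfbLists_succ_iff]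

lemma reducedBFBSeq_succ_eq_image (n : ℕ) :
    ReducedBFBSeq (n + 1) = seqOfList '' {l | l ∈ bfbLists n} := by
  ext r
  constructor
  · intro hr
    have hlr := seqOfList_ofFn hr.2.1
    refine ⟨_, (seqOfList_mem_reducedBFBSeq_iff (by simp)).mp ?_, hlr⟩
    rwa [hlr]
  · rintro ⟨l, hl, rfl⟩
    exact (seqOfList_mem_reducedBFBSeq_iff (length_of_mem_bfbLists hl)).mpr hl

lemma ncard_reducedBFBSeq_succ (n : ℕ) : (ReducedBFBSeq (n + 1)).ncard = (bfbLists n).length := by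
  have hinj : Set.InjOn seqOfList {l | l ∈ bfbLists n} := fun l₁ h₁ l₂ h₂ =>
    eq_of_seqOfList_eq_of_length_eq <|
      (length_of_mem_bfbLists h₁).trans (length_of_mem_bfbLists h₂).symm
  rw [reducedBFBSeq_succ_eq_image, hinj.ncard_image, ← List.coe_toFinset, Set.ncard_coe_finset,
    List.toFinset_card_of_nodup (nodup_bfbLists n)]

set_option maxRecDepth 10000 in
/-- The number of reduced BFB sequences of length `n = 1, …, 6` is
`1, 1, 2, 7, 41, 397` respectively. -/
theorem reduced_bfb_counts :
    (ReducedBFBSeq 1).ncard = 1 ∧ (ReducedBFBSeq 2).ncard = 1 ∧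
    (ReducedBFBSeq 3).ncard = 2 ∧ (ReducedBFBSeq 4).ncard = 7 ∧
    (ReducedBFBSeq 5).ncard = 41 ∧ (ReducedBFBSeq 6).ncard = 397 := by
  refine ⟨?_, ?_, ?_, ?_, ?_, ?_⟩ <;> exact (ncard_reducedBFBSeq_succ _).trans (by decide)
end

section
/- Any full BFB sequence can be reduced to a reduced BFB sequence (one with all terms strictly positive) by repeatedly replacing a consecutive pair (r_{k-1}, r_k) with r_k ≤ 0 by the single term r_{k-1} + r_k, and this procedure terminates, preserving the final partial sum s_n. -/
/-!
Merging a nonpositive term `b` into its predecessor `a`, where the partial sum before `a` is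
`s`, keeps the full BFB bounds: `a + b ≤ a ≤ s`, and `-s < a + b` is just the bound
`-(s + a) < b` on `b`. The later partial sums are unchanged, so the later terms are unaffected;
a merge at the head forces `b = 0` since `-1 < b ≤ 0`. Each merge shortens the list and keeps its
sum, and once no nonpositive term is left the full BFB bounds give a reduced BFB sequence.
-/

/-- The `k`-th partial sum of a list of integers. -/
def partialSum (l : List ℤ) (k : ℕ) : ℤ := (l.take k).sum

/-- A full BFB sequence as a list: first term `1` and
`-s k < r (k+1) ≤ s k` for every later term. -/
def IsFullBFBList (l : List ℤ) : Prop :=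
  l ≠ [] ∧ l.headI = 1 ∧
    ∀ k, k + 1 < l.length →
      -(partialSum l (k + 1)) < l.getD (k + 1) 0 ∧
        l.getD (k + 1) 0 ≤ partialSum l (k + 1)

/-- A reduced BFB sequence as a list: all terms strictly positive, first term
`1`, and each later term at most the preceding partial sum. -/
def IsReducedBFBList (l : List ℤ) : Prop :=
  l ≠ [] ∧ l.headI = 1 ∧ (∀ x ∈ l, 0 < x) ∧
    ∀ k, k + 1 < l.length → l.getD (k + 1) 0 ≤ partialSum l (k + 1)

/-- One reduction step: merge a nonpositive term into its predecessor. -/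
def MergeStep (l l' : List ℤ) : Prop :=
  ∃ p q a b, b ≤ 0 ∧ l = p ++ [a, b] ++ q ∧ l' = p ++ [a + b] ++ q

theorem partialSum_zero (l : List ℤ) : partialSum l 0 = 0 := by
  simp [partialSum]

theorem partialSum_cons_succ (x : ℤ) (l : List ℤ) (k : ℕ) :
    partialSum (x :: l) (k + 1) = x + partialSum l k := by
  simp [partialSum]

namespace MergeStep

theorem length_lt {l l' : List ℤ} (h : MergeStep l l') : l'.length < l.length := by
  obtain ⟨p, q, a, b, -, rfl, rfl⟩ := h
  simp

theorem sum_eq {l l' : List ℤ} (h : MergeStep l l') : l'.sum = l.sum := by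
  obtain ⟨p, q, a, b, -, rfl, rfl⟩ := h
  simp [add_assoc]

end MergeStep

/-- `BFBFrom s t`: the terms `t` obey the full BFB bounds when they follow a prefix of sum `s`. -/
def BFBFrom : ℤ → List ℤ → Prop
  | _, [] => True
  | s, x :: t => -s < x ∧ x ≤ s ∧ BFBFrom (s + x) t

@[simp]
theorem bfbFrom_nil (s : ℤ) : BFBFrom s [] := trivial

@[simp]
theorem bfbFrom_cons (s x : ℤ) (t : List ℤ) :
    BFBFrom s (x :: t) ↔ -s < x ∧ x ≤ s ∧ BFBFrom (s + x) t := Iff.rfl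

theorem bfbFrom_append (s : ℤ) (p q : List ℤ) :
    BFBFrom s (p ++ q) ↔ BFBFrom s p ∧ BFBFrom (s + p.sum) q := by
  induction p generalizing s with
  | nil => simp
  | cons x p ih => simp [ih, add_assoc, and_assoc]

theorem bfbFrom_iff_getD (s : ℤ) (t : List ℤ) :
    BFBFrom s t ↔ ∀ k < t.length,
      -(s + partialSum t k) < t.getD k 0 ∧ t.getD k 0 ≤ s + partialSum t k := by
  induction t generalizing s with
  | nil => simp
  | cons x t ih =>
    rw [bfbFrom_cons, ih, List.length_cons, Nat.forall_lt_succ_left]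
    simp only [partialSum_zero, partialSum_cons_succ, List.getD_cons_zero, List.getD_cons_succ,
      add_zero, add_assoc, and_assoc]

theorem isFullBFBList_cons_iff (x : ℤ) (t : List ℤ) :
    IsFullBFBList (x :: t) ↔ x = 1 ∧ BFBFrom 1 t := by
  simp only [IsFullBFBList, bfbFrom_iff_getD, partialSum_cons_succ, List.getD_cons_succ,
    List.length_cons, Nat.add_lt_add_iff_right, List.headI_cons, ne_eq, reduceCtorEq,
    not_false_eq_true, true_and]
  exact and_congr_right fun hx => by subst hx; rfl

theorem BFBFrom.merge {s a b : ℤ} {p q : List ℤ} (h : BFBFrom s (p ++ a :: b :: q)) (hb : b ≤ 0) :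
    BFBFrom s (p ++ (a + b) :: q) := by
  rw [bfbFrom_append] at h ⊢
  obtain ⟨hp, ha₁, ha₂, hb₁, -, hq⟩ := by simpa using h
  refine ⟨hp, by omega, by omega, by simpa [add_assoc] using hq⟩

theorem IsFullBFBList.mergeStep {l l' : List ℤ} (hl : IsFullBFBList l) (h : MergeStep l l') :
    IsFullBFBList l' := by
  obtain ⟨p, q, a, b, hb, rfl, rfl⟩ := h
  cases p with
  | nil =>
    obtain ⟨rfl, hb₁, -, hq⟩ := by simpa [isFullBFBList_cons_iff] using hl
    obtain rfl : b = 0 := by omega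
    simpa [isFullBFBList_cons_iff] using hq
  | cons x p =>
    simp only [List.append_assoc, List.cons_append,
      isFullBFBList_cons_iff] at hl ⊢
    exact ⟨hl.1, hl.2.merge hb⟩

theorem IsFullBFBList.isReducedBFBList {l : List ℤ} (hl : IsFullBFBList l)
    (hpos : ∀ x ∈ l, 0 < x) : IsReducedBFBList l :=
  ⟨hl.1, hl.2.1, hpos, fun k hk => (hl.2.2 k hk).2⟩

theorem exists_mergeStep_of_mem_tail {l : List ℤ} {y : ℤ} (hy : y ∈ l.tail) (hy₀ : y ≤ 0) :
    ∃ l', MergeStep l l' := by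
  obtain _ | ⟨x, t⟩ := l
  · simp at hy
  obtain ⟨u, v, rfl⟩ := List.append_of_mem hy
  obtain h | ⟨p, a, h⟩ := (x :: u).eq_nil_or_concat
  · simp at h
  refine ⟨p ++ [a + y] ++ v, p, v, a, y, hy₀, ?_, rfl⟩
  rw [← List.cons_append, h]
  simp

theorem IsFullBFBList.exists_reduced {l : List ℤ} (hl : IsFullBFBList l) :
    ∃ l', Relation.ReflTransGen MergeStep l l' ∧ IsReducedBFBList l' ∧ l'.sum = l.sum := by
  by_cases hpos : ∀ x ∈ l, 0 < x
  · exact ⟨l, .refl, hl.isReducedBFBList hpos, rfl⟩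
  obtain ⟨y, hy, hy₀⟩ : ∃ y ∈ l, y ≤ 0 := by simpa using hpos
  have hy_tail : y ∈ l.tail := by
    obtain _ | ⟨x, t⟩ := l
    · simp at hy
    obtain ⟨rfl, -⟩ := (isFullBFBList_cons_iff x t).1 hl
    rcases List.mem_cons.1 hy with rfl | hy
    · omega
    · exact hy
  obtain ⟨l', hstep⟩ := exists_mergeStep_of_mem_tail hy_tail hy₀
  obtain ⟨l'', hl'', hred, hsum⟩ := (hl.mergeStep hstep).exists_reduced
  exact ⟨l'', .head hstep hl'', hred, hsum.trans hstep.sum_eq⟩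
termination_by l.length
decreasing_by exact hstep.length_lt

/-- Any full BFB sequence can be reduced, by repeatedly merging a nonpositive
term into its predecessor, to a reduced BFB sequence; each step strictly
decreases the length (so the procedure terminates), and the total sum is
preserved. -/
theorem full_bfb_reduces (l : List ℤ) (hl : IsFullBFBList l) :
    (∀ x y : List ℤ, MergeStep x y → y.length < x.length) ∧
    ∃ l', Relation.ReflTransGen MergeStep l l' ∧
      IsReducedBFBList l' ∧ l'.sum = l.sum :=
  ⟨fun _ _ h => h.length_lt, hl.exists_reduced⟩
end

section
/- The probability that a sequence of three BFB folds follows representative sequence [1,1,2] given prefix [1,1] equals (1/2)·log 2; i.e., ∫∫_{0<x_2<x_1<1} (x_1/(4x_1 − 2x_2)) · (1/x_1) dx_1 dx_2 = (1/2) log 2. -/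
open intervalIntegral

/-! Once `x₁` cancels, the inner integral is `(1/2) log (4x₁ / 2x₁) = (1/2) log 2` for every
`x₁ > 0`, so the outer integral is that constant. -/

theorem integral_inv_mul_sub_mul {a b c : ℝ} (ha : 0 < a) (hb : 0 < b) (hbc : b < c) :
    ∫ x in (0:ℝ)..a, (c * a - b * x)⁻¹ = b⁻¹ * Real.log (c / (c - b)) := by
  have hlower : 0 < c * a - b * a := by nlinarith
  rw [integral_comp_sub_mul (fun x => x⁻¹) hb.ne', integral_inv_of_pos hlower (by nlinarith),
    smul_eq_mul, mul_zero, sub_zero, ← sub_mul, mul_div_mul_right _ _ ha.ne']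

/-- The probability of BFB sequence `[1,1,2]` given prefix `[1,1]`:
`∫₀¹ ∫₀^{x₁} (x₁ / (4x₁ − 2x₂)) · (1/x₁) dx₂ dx₁ = (1/2) log 2`. -/
theorem bfb_112_probability :
    (∫ x₁ in (0:ℝ)..1, ∫ x₂ in (0:ℝ)..x₁,
        x₁ / (4 * x₁ - 2 * x₂) * (1 / x₁)) = Real.log 2 / 2 := by
  have inner : ∀ x₁ ∈ Set.uIoc (0:ℝ) 1,
      (∫ x₂ in (0:ℝ)..x₁, x₁ / (4 * x₁ - 2 * x₂) * (1 / x₁)) = Real.log 2 / 2 := by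
    rintro x₁ ⟨hx₁, -⟩
    have hx₁ : 0 < x₁ := by simpa using hx₁
    have integrand (x₂ : ℝ) : x₁ / (4 * x₁ - 2 * x₂) * (1 / x₁) = (4 * x₁ - 2 * x₂)⁻¹ := by
      field_simp
    simp_rw [integrand, integral_inv_mul_sub_mul hx₁ two_pos (by norm_num : (2:ℝ) < 4)]
    norm_num
    ring
  rw [integral_congr_ae (.of_forall inner)]
  simp
end

section
/- In any fold word generated by a BFB process, the order in which distinct fold symbols first appear (reading left to right) coincides with the evolutionary (temporal) order of the corresponding BFB events in the reduced BFB sequence. -/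
/-- Fold words generated by the BFB process: `W₁ = 010` and
`Wᵢ = Wᵢ₋₁(bᵢ) · i · Wᵢ₋₁(bᵢ)⁻¹`, where `W(b)` is the length-`b` prefix and
`⁻¹` is reversal. -/
inductive FoldWord : ℕ → List ℕ → Prop
  | base : FoldWord 1 [0, 1, 0]
  | step {n W b} : FoldWord n W → 1 ≤ b → b ≤ W.length →
      FoldWord (n + 1) (W.take b ++ [n + 1] ++ (W.take b).reverse)

/-!
The property "first occurrences appear in increasing order" passes to prefixes, since a symbol
occurring in a prefix has the same first occurrence there as in the whole word. In
`T ++ [m] ++ T.reverse` with all symbols of `T` below `m`, every old symbol first occurs inside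
`T`, at its old position, and the new symbol `m` first occurs at `T.length`, after all of them.
-/

namespace List

variable {α : Type*} [LinearOrder α]

def IdxOfMonotone (W : List α) : Prop :=
  ∀ i j, j < i → i ∈ W → j ∈ W → W.idxOf j < W.idxOf i

theorem idxOf_take_of_mem {W : List α} {b : ℕ} {x : α} (hx : x ∈ W.take b) :
    (W.take b).idxOf x = W.idxOf x := by
  conv_rhs => rw [← take_append_drop b W]
  exact (idxOf_append_of_mem hx).symm

theorem IdxOfMonotone.take {W : List α} (hW : W.IdxOfMonotone) (b : ℕ) :
    (W.take b).IdxOfMonotone := by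
  intro i j hji hi hj
  rw [idxOf_take_of_mem hi, idxOf_take_of_mem hj]
  exact hW i j hji (mem_of_mem_take hi) (mem_of_mem_take hj)

theorem IdxOfMonotone.append_singleton_append_reverse {T : List α} {m : α}
    (hT : T.IdxOfMonotone) (hlt : ∀ x ∈ T, x < m) :
    (T ++ [m] ++ T.reverse).IdxOfMonotone := by
  have hmT : m ∉ T := fun hm => lt_irrefl m (hlt m hm)
  have mem_of_ne : ∀ x ∈ T ++ [m] ++ T.reverse, x ≠ m → x ∈ T := by
    intro x hx hxm
    simp only [mem_append, mem_reverse, mem_singleton] at hx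
    tauto
  have idxOf_of_mem : ∀ x ∈ T, (T ++ [m] ++ T.reverse).idxOf x = T.idxOf x := fun x hx => by
    rw [append_assoc, idxOf_append_of_mem hx]
  intro i j hji hi hj
  have hjT : j ∈ T := mem_of_ne j hj fun hjm => by
    rcases eq_or_ne i m with rfl | him
    · exact hji.ne hjm
    · exact (hji.trans (hlt i (mem_of_ne i hi him))).ne hjm
  rw [idxOf_of_mem j hjT]
  rcases eq_or_ne i m with rfl | him
  · rw [append_assoc, idxOf_append_of_notMem hmT, singleton_append, idxOf_cons_self, add_zero]
    exact idxOf_lt_length_iff.2 hjT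
  · rw [idxOf_of_mem i (mem_of_ne i hi him)]
    exact hT i j hji (mem_of_ne i hi him) hjT

end List

namespace FoldWord

theorem le_of_mem {n : ℕ} {W : List ℕ} (h : FoldWord n W) {x : ℕ} (hx : x ∈ W) : x ≤ n := by
  induction h with
  | base => simp at hx; omega
  | step _ _ _ ih =>
    simp only [List.mem_append, List.mem_reverse, List.mem_singleton] at hx
    rcases hx with (hx | rfl) | hx
    · exact (ih (List.mem_of_mem_take hx)).trans (Nat.le_succ _)
    · exact le_rfl
    · exact (ih (List.mem_of_mem_take hx)).trans (Nat.le_succ _)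

theorem idxOfMonotone {n : ℕ} {W : List ℕ} (h : FoldWord n W) : W.IdxOfMonotone := by
  induction h with
  | base =>
    intro i j hji hi hj
    obtain ⟨rfl, rfl⟩ : i = 1 ∧ j = 0 := by simp at hi hj; omega
    decide
  | @step n W b hW _ _ ih =>
    refine (ih.take b).append_singleton_append_reverse fun x hx => ?_
    exact Nat.lt_succ_of_le (hW.le_of_mem (List.mem_of_mem_take hx))

end FoldWord

/-- In any fold word generated by a BFB process, the order in which the
distinct fold symbols first appear (reading left to right) coincides with the
temporal order of the corresponding BFB events: for fold symbols `j < i` both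
still occurring in the word, the first occurrence of `j` precedes the first
occurrence of `i`. -/
theorem foldword_first_occurrence_order {n : ℕ} {W : List ℕ} (h : FoldWord n W) :
    ∀ i j : ℕ, 1 ≤ j → j < i → i ∈ W → j ∈ W → W.idxOf j < W.idxOf i :=
  fun i j _ => h.idxOfMonotone i j
end

section
/- If a fold word has the form W = X·n·X^{-1} (a palindrome with unique central symbol n) generated by the BFB recursion, then n is the maximal symbol of W and occurs exactly once; moreover undoing the last fold (replacing W by X) yields a valid BFB fold word on one fewer cycle. -/
/-- A fold word after `n` cycles is a palindrome `X · n · X⁻¹` whose central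
symbol `n` is maximal and occurs exactly once; moreover (for `n ≥ 2`) undoing
the last fold recovers `X` as a prefix of a valid fold word on one fewer
cycle, inverting the BFB evolution one step. -/
theorem foldword_centre_undo {n : ℕ} {W : List ℕ} (h : FoldWord n W) :
    (∃ X : List ℕ, W = X ++ [n] ++ X.reverse ∧ W.count n = 1 ∧
      ∀ m ∈ W, m ≤ n) ∧
    (2 ≤ n → ∃ (W' : List ℕ) (b : ℕ), FoldWord (n - 1) W' ∧
      1 ≤ b ∧ b ≤ W'.length ∧
      W = W'.take b ++ [n] ++ (W'.take b).reverse) := by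
  induction h with
  | base =>
    refine ⟨⟨[0], by decide, by decide, by decide⟩, ?_⟩
    omega
  | @step n W b hW hb1 hb2 ih =>
    obtain ⟨⟨X, hX, hcnt, hle⟩, _⟩ := ih
    have hnot : (n + 1) ∉ W.take b := fun hm => by
      have := hle _ (List.mem_of_mem_take hm); omega
    constructor
    · refine ⟨W.take b, rfl, ?_, ?_⟩
      · simp [List.count_append, List.count_eq_zero.mpr hnot,
          List.count_eq_zero.mpr (by simpa using hnot)]
      · intro m hm
        simp only [List.mem_append, List.mem_reverse, List.mem_singleton] at hm
        rcases hm with (hm | rfl) | hm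
        · exact le_trans (hle _ (List.mem_of_mem_take hm)) (Nat.le_succ n)
        · exact le_refl _
        · exact le_trans (hle _ (List.mem_of_mem_take hm)) (Nat.le_succ n)
    · intro _
      exact ⟨W, b, by simpa using hW, hb1, hb2, rfl⟩
end
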